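/- arXiv:1204.4140 — 3 statements merged into one kernel-verified Lean document; each statement's English description precedes it below -/
import Mathlib

section
/- Let {X_t} be a finite irreducible reversible Markov chain on N with stationary distribution π and transition matrix P, and let P' be a transition matrix on the augmented space Ω = {(i,j) : P(i,j) > 0} satisfying: P'(e_ij, e_lk) = 0 whenever j ≠ l, and for all e_ij, e_jk ∈ Ω with i ≠ k, P(j,i)P'(e_ij,e_jk) = P(j,k)P'(e_kj,e_ji). Then the distribution π'(e_ij) = π(i)P(i,j) is stationary for P', i.e., ∑_{e_ij ∈ Ω} π'(e_ij) P'(e_ij, e_jk) = π'(e_jk) for every e_jk ∈ Ω. -/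
open Finset
open scoped Classical

/-!
Reversibility turns the flow `π(i) P(i,j) P'(e_ij, e_jk)` into `π(j) P(j,i) P'(e_ij, e_jk)`, and
Neal's condition turns this into `π(j) P(j,k) P'(e_kj, e_ji)`. Summing over `i` leaves
`π(j) P(j,k)` times the total mass that `P'` sends from `e_kj`, which is `1`.
-/

section ProdSum

variable {α β M : Type*} [Fintype α] [Fintype β] [AddCommMonoid M]
  (p : α × β → Prop) [DecidablePred p] (F : α × β → M)

theorem Finset.sum_filter_prod_of_snd_ne (b : β) (hF : ∀ e : α × β, e.2 ≠ b → F e = 0) :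
    ∑ e ∈ univ.filter p, F e = ∑ a ∈ univ.filter (fun a => p (a, b)), F (a, b) := by
  rw [sum_filter, sum_filter, Fintype.sum_prod_type_right,
    Fintype.sum_eq_single b fun b' hb' => sum_eq_zero fun a _ => by simp [hF (a, b') hb']]

theorem Finset.sum_filter_prod_of_fst_ne (a : α) (hF : ∀ e : α × β, e.1 ≠ a → F e = 0) :
    ∑ e ∈ univ.filter p, F e = ∑ b ∈ univ.filter (fun b => p (a, b)), F (a, b) := by
  rw [sum_filter, sum_filter, Fintype.sum_prod_type,
    Fintype.sum_eq_single a fun a' ha' => sum_eq_zero fun b _ => by simp [hF (a', b) ha']]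

end ProdSum

section Reversible

variable {N : Type*} {P : Matrix N N ℝ} {pr : N → ℝ}

theorem pos_of_reversible_of_pos (hPnn : ∀ i j, 0 ≤ P i j)
    (hrev : ∀ i j, pr i * P i j = pr j * P j i) {i j : N} (hj : pr j ≠ 0) (hji : 0 < P j i) :
    0 < P i j := by
  refine (hPnn i j).lt_of_ne fun h => ?_
  have := hrev i j
  rw [← h, mul_zero] at this
  exact (mul_ne_zero hj hji.ne').symm this

theorem reversible_flow_eq_of_neal (hPnn : ∀ i j, 0 ≤ P i j)
    (hrev : ∀ i j, pr i * P i j = pr j * P j i) {P' : N × N → N × N → ℝ}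
    (hbal : ∀ i j k : N, 0 < P i j → 0 < P j k → i ≠ k →
      P j i * P' (i, j) (j, k) = P j k * P' (k, j) (j, i))
    {i j k : N} (hij : 0 < P i j) (hjk : 0 < P j k) :
    pr i * P i j * P' (i, j) (j, k) = pr j * P j k * (if 0 < P j i then P' (k, j) (j, i) else 0) := by
  rw [hrev i j]
  split_ifs with hji
  · rcases eq_or_ne i k with rfl | hik
    · rfl
    · rw [mul_assoc, hbal i j k hij hjk hik, mul_assoc]
  · simp [le_antisymm (not_lt.mp hji) (hPnn j i)]

end Reversible

theorem neal_condition_stationary_general {N : Type*} [Fintype N]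
    (P : Matrix N N ℝ) (pr : N → ℝ)
    (hPnn : ∀ i j, 0 ≤ P i j)
    (hrev : ∀ i j, pr i * P i j = pr j * P j i)
    (P' : N × N → N × N → ℝ)
    (hP'row : ∀ e : N × N, 0 < P e.1 e.2 →
      ∑ e' ∈ Finset.univ.filter (fun e' : N × N => 0 < P e'.1 e'.2), P' e e' = 1)
    (hchain : ∀ i j l k : N, j ≠ l → P' (i, j) (l, k) = 0)
    (hbal : ∀ i j k : N, 0 < P i j → 0 < P j k → i ≠ k →
      P j i * P' (i, j) (j, k) = P j k * P' (k, j) (j, i)) :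
    ∀ j k : N, 0 < P j k →
      ∑ e ∈ Finset.univ.filter (fun e : N × N => 0 < P e.1 e.2),
        (pr e.1 * P e.1 e.2) * P' e (j, k) = pr j * P j k := by
  intro j k hjk
  have hmass : pr j ≠ 0 →
      ∑ i ∈ univ.filter (fun i => 0 < P i j), (if 0 < P j i then P' (k, j) (j, i) else 0) = 1 := by
    intro hj
    rw [sum_ite, sum_const_zero, add_zero, filter_filter,
      filter_congr fun i _ => and_iff_right_of_imp (pos_of_reversible_of_pos hPnn hrev hj),
      ← hP'row (k, j) (pos_of_reversible_of_pos hPnn hrev hj hjk),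
      sum_filter_prod_of_fst_ne _ _ j fun e he => hchain k j e.1 e.2 (Ne.symm he)]
  calc ∑ e ∈ univ.filter (fun e : N × N => 0 < P e.1 e.2), pr e.1 * P e.1 e.2 * P' e (j, k)
      = ∑ i ∈ univ.filter (fun i => 0 < P i j), pr i * P i j * P' (i, j) (j, k) :=
        sum_filter_prod_of_snd_ne _ _ j fun e he => by rw [hchain e.1 e.2 j k he, mul_zero]
    _ = pr j * P j k * ∑ i ∈ univ.filter (fun i => 0 < P i j),
          (if 0 < P j i then P' (k, j) (j, i) else 0) := by
        rw [mul_sum]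
        exact sum_congr rfl fun i hi =>
          reversible_flow_eq_of_neal hPnn hrev hbal (mem_filter.mp hi).2 hjk
    _ = pr j * P j k := by
        rcases eq_or_ne (pr j) 0 with hj | hj
        · simp [hj]
        · rw [hmass hj, mul_one]

/-- If `P'` on the augmented space `Ω = {(i,j) : P i j > 0}`
vanishes off chained pairs and satisfies Neal's balance condition
`P(j,i)P'(e_ij,e_jk) = P(j,k)P'(e_kj,e_ji)`, then `π'(e_ij) = pr i * P i j`
is stationary for `P'`. -/
theorem neal_condition_stationary {N : Type*} [Fintype N] [DecidableEq N]
    (P : Matrix N N ℝ) (pr : N → ℝ)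
    (hPnn : ∀ i j, 0 ≤ P i j) (hProw : ∀ i, ∑ j, P i j = 1)
    (hirr : ∀ i j, ∃ n : ℕ, 0 < (P ^ n) i j)
    (hprnn : ∀ i, 0 ≤ pr i) (hprsum : ∑ i, pr i = 1)
    (hstat : ∀ j, ∑ i, pr i * P i j = pr j)
    (hrev : ∀ i j, pr i * P i j = pr j * P j i)
    (P' : N × N → N × N → ℝ)
    (hP'nn : ∀ e e', 0 ≤ P' e e')
    (hP'row : ∀ e : N × N, 0 < P e.1 e.2 →
      ∑ e' ∈ Finset.univ.filter (fun e' : N × N => 0 < P e'.1 e'.2), P' e e' = 1)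
    (hchain : ∀ i j l k : N, j ≠ l → P' (i, j) (l, k) = 0)
    (hbal : ∀ i j k : N, 0 < P i j → 0 < P j k → i ≠ k →
      P j i * P' (i, j) (j, k) = P j k * P' (k, j) (j, i)) :
    ∀ j k : N, 0 < P j k →
      ∑ e ∈ Finset.univ.filter (fun e : N × N => 0 < P e.1 e.2),
        (pr e.1 * P e.1 e.2) * P' e (j, k) = pr j * P j k :=
  neal_condition_stationary_general P pr hPnn hrev P' hP'row hchain hbal
end

section
/- With notation as in the MHDA construction: let P̃ be the embedded chain of a reversible MH chain P with stationary distribution π̃ on N, and define on Ω the transition probabilities P̃'(e_ij,e_jk) = P̃(j,k) + P̃(j,i)Q'(e_ij,e_jk)A'(e_ij,e_jk) for i ≠ k, where A'(e_ij,e_jk) = min{1, P²(j,k)Q'(e_kj,e_ji)/(P²(j,i)Q'(e_ij,e_jk))}. Then for all e_ij, e_jk ∈ Ω with i ≠ k, the balance condition π̃'(e_ij)P̃'(e_ij,e_jk) = π̃'(e_kj)P̃'(e_kj,e_ji) holds, where π̃'(e_ij) = π̃(i)P̃(i,j). -/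
/-! The flow `π̃(i)P̃(i,j)` of the embedded chain equals `π(i)P(i,j)/Z` with `Z = ∑ π(l)γ(l)`, so by
reversibility of `P` both sides of the balance equation equal `π(j)/(Z γ(j))` times an expression
in `P(j,i)`, `P(j,k)`. The terms `P(j,i)P(j,k)` agree, and the remaining ones agree because the
acceptance rule `A'` is Metropolis–Hastings, i.e. `a · min 1 (b/a) = min a b` is symmetric. -/

section MetropolisAcceptance

variable {α : Type*} [Field α] [LinearOrder α] [IsStrictOrderedRing α]

theorem mul_min_one_div_eq_min {a b : α} (ha : 0 ≤ a) (hb : 0 ≤ b) :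
    a * min 1 (b / a) = min a b := by
  rcases ha.eq_or_lt with rfl | ha
  · simp [hb]
  · rw [mul_min_of_nonneg _ _ ha.le, mul_one, mul_div_cancel₀ _ ha.ne']

theorem mul_min_one_div_comm {a b : α} (ha : 0 ≤ a) (hb : 0 ≤ b) :
    a * min 1 (b / a) = b * min 1 (a / b) := by
  rw [mul_min_one_div_eq_min ha hb, mul_min_one_div_eq_min hb ha, min_comm]

end MetropolisAcceptance

theorem mhda_balance_general {N : Type*} [Fintype N]
    (P : Matrix N N ℝ) (pr : N → ℝ)
    (hrev : ∀ i j, pr i * P i j = pr j * P j i)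
    (hdiag : ∀ i, P i i < 1)
    (γ : N → ℝ) (hγ : ∀ i, γ i = 1 - P i i)
    (Pt : N → N → ℝ)
    (hPtoff : ∀ i j, i ≠ j → Pt i j = P i j / γ i)
    (hPtdiag : ∀ i, Pt i i = 0)
    (prt : N → ℝ)
    (hprt : ∀ i, prt i = pr i * γ i / ∑ k, pr k * γ k)
    (Q' : N × N → N × N → ℝ)
    (A' : N × N → N × N → ℝ)
    (hA' : ∀ i j k : N, A' (i, j) (j, k)
      = min 1 ((P j k)^2 * Q' (k, j) (j, i) / ((P j i)^2 * Q' (i, j) (j, k))))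
    (Pt' : N × N → N × N → ℝ)
    (hPt' : ∀ i j k : N, i ≠ k →
      Pt' (i, j) (j, k) = Pt j k + Pt j i * Q' (i, j) (j, k) * A' (i, j) (j, k)) :
    ∀ i j k : N, 0 < Pt i j → 0 < Pt j k → i ≠ k →
      0 < Q' (i, j) (j, k) → 0 < Q' (k, j) (j, i) →
      (prt i * Pt i j) * Pt' (i, j) (j, k)
        = (prt k * Pt k j) * Pt' (k, j) (j, i) := by
  intro i j k hPtij hPtjk hik hQij hQkj
  have hij : i ≠ j := by rintro rfl; exact hPtij.ne' (hPtdiag i)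
  have hjk : j ≠ k := by rintro rfl; exact hPtjk.ne' (hPtdiag j)
  set Z := ∑ l, pr l * γ l
  have hflow : ∀ l m, l ≠ m → prt l * Pt l m = pr l * P l m / Z := by
    intro l m hlm
    have hγl : γ l ≠ 0 := by rw [hγ]; exact (sub_pos.2 (hdiag l)).ne'
    rw [hprt, hPtoff l m hlm]
    field_simp
  have hacc : (P j i)^2 * Q' (i, j) (j, k) * A' (i, j) (j, k)
      = (P j k)^2 * Q' (k, j) (j, i) * A' (k, j) (j, i) := by
    rw [hA', hA']
    exact mul_min_one_div_comm (by positivity) (by positivity)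
  rw [hflow i j hij, hflow k j hjk.symm, hrev i j, hrev k j, hPt' i j k hik,
    hPt' k j i hik.symm, hPtoff j k hjk, hPtoff j i hij.symm]
  linear_combination (pr j / (Z * γ j)) * hacc

/-- With `P̃` the embedded chain of a reversible MH chain `P`
(stationary distribution `pr`, `π̃ ∝ pr·γ`), `π̃'(e_ij) = π̃(i)P̃(i,j)`, and MHDA
transition probabilities
`P̃'(e_ij,e_jk) = P̃(j,k) + P̃(j,i)Q'(e_ij,e_jk)A'(e_ij,e_jk)` with
`A'(e_ij,e_jk) = min{1, P(j,k)²Q'(e_kj,e_ji)/(P(j,i)²Q'(e_ij,e_jk))}`, the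
balance condition `π̃'(e_ij)P̃'(e_ij,e_jk) = π̃'(e_kj)P̃'(e_kj,e_ji)` holds for
all `e_ij, e_jk ∈ Ω` with `i ≠ k`. -/
theorem mhda_balance {N : Type*} [Fintype N] [DecidableEq N]
    (P : Matrix N N ℝ) (pr : N → ℝ)
    (hPnn : ∀ i j, 0 ≤ P i j) (hProw : ∀ i, ∑ j, P i j = 1)
    (hirr : ∀ i j, ∃ n : ℕ, 0 < (P ^ n) i j)
    (hprpos : ∀ i, 0 < pr i) (hprsum : ∑ i, pr i = 1)
    (hrev : ∀ i j, pr i * P i j = pr j * P j i)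
    (hdiag : ∀ i, P i i < 1)
    (γ : N → ℝ) (hγ : ∀ i, γ i = 1 - P i i)
    (Pt : N → N → ℝ)
    (hPtoff : ∀ i j, i ≠ j → Pt i j = P i j / γ i)
    (hPtdiag : ∀ i, Pt i i = 0)
    (prt : N → ℝ)
    (hprt : ∀ i, prt i = pr i * γ i / ∑ k, pr k * γ k)
    (Q' : N × N → N × N → ℝ)
    (hQ'nn : ∀ e e', 0 ≤ Q' e e')
    (hQ'row : ∀ e : N × N, 0 < Pt e.1 e.2 →
      ∑ e' ∈ Finset.univ.filter (fun e' : N × N => 0 < Pt e'.1 e'.2), Q' e e' = 1)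
    (hQ'chain : ∀ i j l k : N, j ≠ l → Q' (i, j) (l, k) = 0)
    (hQ'sym : ∀ i j k : N, 0 < Q' (i, j) (j, k) ↔ 0 < Q' (k, j) (j, i))
    (A' : N × N → N × N → ℝ)
    (hA' : ∀ i j k : N, A' (i, j) (j, k)
      = min 1 ((P j k)^2 * Q' (k, j) (j, i) / ((P j i)^2 * Q' (i, j) (j, k))))
    (Pt' : N × N → N × N → ℝ)
    (hPt' : ∀ i j k : N, i ≠ k →
      Pt' (i, j) (j, k) = Pt j k + Pt j i * Q' (i, j) (j, k) * A' (i, j) (j, k)) :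
    ∀ i j k : N, 0 < Pt i j → 0 < Pt j k → i ≠ k →
      0 < Q' (i, j) (j, k) → 0 < Q' (k, j) (j, i) →
      (prt i * Pt i j) * Pt' (i, j) (j, k)
        = (prt k * Pt k j) * Pt' (k, j) (j, i) :=
  mhda_balance_general P pr hrev hdiag γ hγ Pt hPtoff hPtdiag prt hprt Q' A' hA' Pt' hPt'
end

section
/- Equality of mean sojourn rates under MHDA and MH: let π̃' (e_ij) = π̃(i)P̃(i,j) on Ω and γ'(e_ij) = γ(j), where π̃(i) ∝ π(i)γ(i) and P̃ is the embedded chain of a reversible chain P with stationary distribution π. Define λ(e_ij) ∝ π̃'(e_ij)/γ'(e_ij). Then E_λ(γ') = E_π(γ), i.e., ∑_{e_ij∈Ω} γ'(e_ij)λ(e_ij) = ∑_i γ(i)π(i). -/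
/-!
The weights `π̃(i) P̃(i,j)` form a probability on pairs, and `λ` is their reweighting by
`1/γ(j)`, so `E_λ(γ')` is the harmonic mean `1 / ∑_{i,j} π̃(i) P̃(i,j) / γ(j)`. The embedded
chain `P̃` inherits reversibility from `P` with respect to `π γ`, so `π̃` is stationary for `P̃`
and the double sum collapses to `∑_j π̃(j) / γ(j) = 1 / ∑_k π(k) γ(k)`.
-/

open Finset
open scoped Classical

theorem Finset.sum_mul_div_div_sum_div {ι : Type*} (s : Finset ι) (μ f : ι → ℝ)
    (hf : ∀ e ∈ s, f e ≠ 0) :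
    ∑ e ∈ s, f e * (μ e / f e / ∑ e' ∈ s, μ e' / f e') = (∑ e ∈ s, μ e) / ∑ e ∈ s, μ e / f e := by
  rw [Finset.sum_div]
  refine Finset.sum_congr rfl fun e he => ?_
  rw [mul_div_assoc', mul_div_cancel₀ _ (hf e he)]

theorem sum_mul_eq_of_detailed_balance {N : Type*} [Fintype N] {Q : Matrix N N ℝ} {ν : N → ℝ}
    (hrev : ∀ i j, ν i * Q i j = ν j * Q j i) (hrow : ∀ i, ∑ j, Q i j = 1) (j : N) :
    ∑ i, ν i * Q i j = ν j := by
  simp only [hrev _ j, ← Finset.mul_sum, hrow, mul_one]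

noncomputable def embeddedChain {N : Type*} [DecidableEq N] (P : Matrix N N ℝ) : Matrix N N ℝ :=
  fun i j => if i = j then 0 else P i j / (1 - P i i)

section EmbeddedChain

variable {N : Type*} [DecidableEq N] {P : Matrix N N ℝ}

theorem eq_embeddedChain {Pt : N → N → ℝ} (hoff : ∀ i j, i ≠ j → Pt i j = P i j / (1 - P i i))
    (hdiag : ∀ i, Pt i i = 0) : Pt = embeddedChain P := by
  funext i j
  by_cases hij : i = j
  · rw [hij, hdiag, embeddedChain, if_pos rfl]
  · rw [hoff i j hij, embeddedChain, if_neg hij]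

theorem embeddedChain_nonneg (hPnn : ∀ i j, 0 ≤ P i j) (hdiag : ∀ i, P i i ≤ 1) (i j : N) :
    0 ≤ embeddedChain P i j := by
  unfold embeddedChain
  split_ifs
  · exact le_rfl
  · exact div_nonneg (hPnn i j) (sub_nonneg.mpr (hdiag i))

theorem embeddedChain_row_sum [Fintype N] (hProw : ∀ i, ∑ j, P i j = 1) (hdiag : ∀ i, P i i ≠ 1)
    (i : N) :
    ∑ j, embeddedChain P i j = 1 := by
  have hoff : ∑ j ∈ univ.erase i, P i j = 1 - P i i := by
    rw [← hProw i, ← Finset.add_sum_erase _ _ (mem_univ i), add_sub_cancel_left]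
  rw [← Finset.add_sum_erase _ _ (mem_univ i)]
  simp only [embeddedChain, ↓reduceIte, zero_add]
  rw [Finset.sum_congr rfl fun j hj => if_neg (Finset.ne_of_mem_erase hj).symm,
    ← Finset.sum_div, hoff, div_self (sub_ne_zero.mpr (hdiag i).symm)]

theorem embeddedChain_detailed_balance {pr : N → ℝ} (hrev : ∀ i j, pr i * P i j = pr j * P j i)
    (hdiag : ∀ i, P i i ≠ 1) (i j : N) :
    pr i * (1 - P i i) * embeddedChain P i j = pr j * (1 - P j j) * embeddedChain P j i := by
  by_cases hij : i = j
  · rw [hij]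
  · simp only [embeddedChain, if_neg hij, if_neg (Ne.symm hij)]
    rw [mul_assoc, mul_div_cancel₀ _ (sub_ne_zero.mpr (hdiag i).symm), mul_assoc,
      mul_div_cancel₀ _ (sub_ne_zero.mpr (hdiag j).symm), hrev]

end EmbeddedChain

section PairSums

variable {N : Type*} [Fintype N] {Q : Matrix N N ℝ} {ν : N → ℝ}

theorem sum_filter_pos_eq_sum (hQ : ∀ i j, 0 ≤ Q i j) (f : N × N → ℝ)
    (hf : ∀ e : N × N, Q e.1 e.2 = 0 → f e = 0) :
    ∑ e ∈ univ.filter (fun e : N × N => 0 < Q e.1 e.2), f e = ∑ e, f e :=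
  Finset.sum_filter_of_ne fun e _ he => (hQ e.1 e.2).lt_of_ne' fun h0 => he (hf e h0)

theorem sum_prod_mul_eq_sum (hrow : ∀ i, ∑ j, Q i j = 1) :
    ∑ e : N × N, ν e.1 * Q e.1 e.2 = ∑ i, ν i := by
  simp only [Fintype.sum_prod_type, ← Finset.mul_sum, hrow, mul_one]

theorem sum_prod_mul_div_eq_sum_div (hstat : ∀ j, ∑ i, ν i * Q i j = ν j) (g : N → ℝ) :
    ∑ e : N × N, ν e.1 * Q e.1 e.2 / g e.2 = ∑ j, ν j / g j := by
  simp only [Fintype.sum_prod_type, Finset.sum_comm (γ := N), ← Finset.sum_div, hstat]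

end PairSums

theorem mean_sojourn_rate_equality_general {N : Type*} [Fintype N] [DecidableEq N]
    (P : Matrix N N ℝ) (pr : N → ℝ)
    (hPnn : ∀ i j, 0 ≤ P i j) (hProw : ∀ i, ∑ j, P i j = 1)
    (hprpos : ∀ i, 0 < pr i) (hprsum : ∑ i, pr i = 1)
    (hrev : ∀ i j, pr i * P i j = pr j * P j i)
    (γ : N → ℝ) (hγdef : ∀ i, γ i = 1 - P i i)
    (hγ : ∀ i, 0 < γ i ∧ γ i ≤ 1)
    (prt : N → ℝ)
    (hprt : ∀ i, prt i = pr i * γ i / ∑ k, pr k * γ k)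
    (Pt : N → N → ℝ)
    (hPtoff : ∀ i j, i ≠ j → Pt i j = P i j / γ i)
    (hPtdiag : ∀ i, Pt i i = 0)
    (lam : N × N → ℝ)
    (hlam : ∀ e : N × N, lam e = (prt e.1 * Pt e.1 e.2 / γ e.2)
      / ∑ e' ∈ Finset.univ.filter (fun e' : N × N => 0 < Pt e'.1 e'.2),
          prt e'.1 * Pt e'.1 e'.2 / γ e'.2) :
    ∑ e ∈ Finset.univ.filter (fun e : N × N => 0 < Pt e.1 e.2),
        γ e.2 * lam e
      = ∑ i, γ i * pr i := by
  have hγ0 : ∀ i, γ i ≠ 0 := fun i => (hγ i).1.ne'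
  have hdiag : ∀ i, P i i < 1 := fun i => sub_pos.mp (hγdef i ▸ (hγ i).1)
  obtain rfl : Pt = embeddedChain P :=
    eq_embeddedChain (fun i j hij => (hPtoff i j hij).trans (by rw [hγdef])) hPtdiag
  set S := ∑ k, pr k * γ k
  have hS : S ≠ 0 := by
    obtain ⟨i₀, -, -⟩ := Finset.exists_ne_zero_of_sum_ne_zero (hprsum ▸ one_ne_zero)
    exact (Finset.sum_pos (fun k _ => mul_pos (hprpos k) (hγ k).1) ⟨i₀, mem_univ _⟩).ne'
  have hrow := embeddedChain_row_sum hProw fun i => (hdiag i).ne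
  have hstat : ∀ j, ∑ i, prt i * embeddedChain P i j = prt j := by
    refine sum_mul_eq_of_detailed_balance (fun i j => ?_) hrow
    simp only [hprt, hγdef, div_mul_eq_mul_div,
      embeddedChain_detailed_balance hrev (fun i => (hdiag i).ne) i j]
  have hPtnn := embeddedChain_nonneg hPnn fun i => (hdiag i).le
  have hnum : ∑ e ∈ univ.filter (fun e : N × N => 0 < embeddedChain P e.1 e.2),
      prt e.1 * embeddedChain P e.1 e.2 = 1 := by
    rw [sum_filter_pos_eq_sum hPtnn _ fun e h => by rw [h, mul_zero], sum_prod_mul_eq_sum hrow]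
    simp only [hprt, ← Finset.sum_div]
    exact div_self hS
  have hden : ∑ e ∈ univ.filter (fun e : N × N => 0 < embeddedChain P e.1 e.2),
      prt e.1 * embeddedChain P e.1 e.2 / γ e.2 = S⁻¹ := by
    rw [sum_filter_pos_eq_sum hPtnn _ fun e h => by rw [h, mul_zero, zero_div],
      sum_prod_mul_div_eq_sum_div hstat]
    calc ∑ j, prt j / γ j = ∑ j, pr j / S := Finset.sum_congr rfl fun j _ => by
          rw [hprt, div_right_comm, mul_div_cancel_right₀ _ (hγ0 j)]
      _ = S⁻¹ := by rw [← Finset.sum_div, hprsum, one_div]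
  simp only [hlam]
  rw [Finset.sum_mul_div_div_sum_div _ _ _ fun e _ => hγ0 e.2, hnum, hden, one_div, inv_inv]
  exact Finset.sum_congr rfl fun i _ => mul_comm _ _

/-- Equality of mean sojourn rates under MHDA and MH: with
`π̃'(e_ij) = π̃(i)P̃(i,j)`, `γ'(e_ij) = γ(j)`, and
`λ(e_ij) ∝ π̃'(e_ij)/γ'(e_ij)` on `Ω = {(i,j) : P̃(i,j) > 0}`, one has
`E_λ(γ') = E_π(γ)`, i.e. `∑_{e_ij∈Ω} γ(j) λ(e_ij) = ∑_i γ(i)π(i)`. -/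
theorem mean_sojourn_rate_equality {N : Type*} [Fintype N] [DecidableEq N]
    (P : Matrix N N ℝ) (pr : N → ℝ)
    (hPnn : ∀ i j, 0 ≤ P i j) (hProw : ∀ i, ∑ j, P i j = 1)
    (hirr : ∀ i j, ∃ n : ℕ, 0 < (P ^ n) i j)
    (hprpos : ∀ i, 0 < pr i) (hprsum : ∑ i, pr i = 1)
    (hrev : ∀ i j, pr i * P i j = pr j * P j i)
    (γ : N → ℝ) (hγdef : ∀ i, γ i = 1 - P i i)
    (hγ : ∀ i, 0 < γ i ∧ γ i ≤ 1)
    (prt : N → ℝ)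
    (hprt : ∀ i, prt i = pr i * γ i / ∑ k, pr k * γ k)
    (Pt : N → N → ℝ)
    (hPtoff : ∀ i j, i ≠ j → Pt i j = P i j / γ i)
    (hPtdiag : ∀ i, Pt i i = 0)
    (lam : N × N → ℝ)
    (hlam : ∀ e : N × N, lam e = (prt e.1 * Pt e.1 e.2 / γ e.2)
      / ∑ e' ∈ Finset.univ.filter (fun e' : N × N => 0 < Pt e'.1 e'.2),
          prt e'.1 * Pt e'.1 e'.2 / γ e'.2) :
    ∑ e ∈ Finset.univ.filter (fun e : N × N => 0 < Pt e.1 e.2),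
        γ e.2 * lam e
      = ∑ i, γ i * pr i :=
  mean_sojourn_rate_equality_general P pr hPnn hProw hprpos hprsum hrev γ hγdef hγ prt hprt Pt
    hPtoff hPtdiag lam hlam
end
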